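/- Let α, β, γ, λ, μ be real numbers and let N(α,β,γ,λ,μ) be the 3×3 real matrix whose rows are (α,β,γ), (λα,λβ,λγ), (μα,μβ,μγ). Suppose α ≠ 0 and α² + λβ² + μγ² = 0. If one of the following holds: (1) γ = 0, λβμ ≠ 0 and μ < 0; (2) β = 0, λγμ ≠ 0 and λ < 0; then the evolution algebra E_{N(α,β,γ,λ,μ)} is isomorphic to the evolution algebra E₃ whose structure matrix has rows (1,1,0), (−1,−1,0), (−1,−1,0). -/

import Mathlib

/-- Evolution algebra multiplication on ℝ³ determined by a structure matrix `A`: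
`(x ∗_A y) j = ∑ i, x i * y i * A i j`. -/
def evolMul (A : Matrix (Fin 3) (Fin 3) ℝ) (x y : Fin 3 → ℝ) : Fin 3 → ℝ :=
  fun j => ∑ i, x i * y i * A i j

/-- The evolution algebras with structure matrices `A` and `B` are isomorphic:
there is an ℝ-linear equivalence of ℝ³ intertwining the two multiplications. -/
def EvolIso (A B : Matrix (Fin 3) (Fin 3) ℝ) : Prop :=
  ∃ f : (Fin 3 → ℝ) ≃ₗ[ℝ] (Fin 3 → ℝ),
    ∀ x y, f (evolMul A x y) = evolMul B (f x) (f y)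


/-!
A monomial change of basis `eᵢ ↦ tᵢ e_{σ i}` is an isomorphism `E_A ≅ E_B` as soon as
`a_{ij} t_j = t_i² b_{σ i, σ j}`. For the rank-one matrix `N(α, β, γ, λ, μ)` such a rescaling
already works: when `γ = 0` take `t = (α, α²/β, α √(-μ))`; when `β = 0` swap `e₂` and `e₃` and
take `t = (α, α √(-λ), α²/γ)`. The relation `α² + λβ² + μγ² = 0` is what the row of `e₂`
(for `γ = 0`), resp. of `e₃` (for `β = 0`), needs.
-/

theorem evolIso_of_monomial {A B : Matrix (Fin 3) (Fin 3) ℝ} (σ : Equiv.Perm (Fin 3))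
    (t : Fin 3 → ℝ) (ht : ∀ i, t i ≠ 0) (h : ∀ i j, A i j * t j = t i ^ 2 * B (σ i) (σ j)) :
    EvolIso A B := by
  let scale : (Fin 3 → ℝ) ≃ₗ[ℝ] (Fin 3 → ℝ) :=
    .piCongrRight fun i => .smulOfNeZero ℝ ℝ (t i) (ht i)
  refine ⟨scale.trans (.funCongrLeft ℝ ℝ σ.symm), fun x y => funext fun k => ?_⟩
  obtain ⟨j, rfl⟩ := σ.surjective k
  conv_rhs => rw [evolMul, ← Equiv.sum_comp σ]
  simp only [scale, LinearEquiv.smulOfNeZero, LinearEquiv.smulOfUnit, LinearEquiv.trans_apply,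
    LinearEquiv.funCongrLeft_apply, LinearMap.funLeft_apply, Equiv.symm_apply_apply,
    LinearEquiv.piCongrRight_apply, evolMul, map_sum, DistribMulAction.toLinearEquiv_apply,
    Units.smul_mk0, smul_eq_mul]
  refine Finset.sum_congr rfl fun i _ => ?_
  linear_combination x i * y i * h i j

theorem evolIso_of_third_eq_zero {a b l m : ℝ} (ha : a ≠ 0) (hb : b ≠ 0)
    (hq : a ^ 2 + l * b ^ 2 = 0) (hm : m < 0) :
    EvolIso !![a, b, 0; l * a, l * b, 0; m * a, m * b, 0] !![1, 1, 0; -1, -1, 0; -1, -1, 0] := by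
  have hs : √(-m) ^ 2 = -m := Real.sq_sqrt (by linarith)
  have hs0 : √(-m) ≠ 0 := (Real.sqrt_pos.2 (by linarith)).ne'
  refine evolIso_of_monomial 1 ![a, a ^ 2 / b, a * √(-m)] ?_ ?_
  · intro i
    fin_cases i <;> simp [*]
  · intro i j
    fin_cases i <;> fin_cases j <;> simp <;> field_simp <;> linarith

theorem evolIso_of_second_eq_zero {a c l m : ℝ} (ha : a ≠ 0) (hc : c ≠ 0)
    (hq : a ^ 2 + m * c ^ 2 = 0) (hl : l < 0) :
    EvolIso !![a, 0, c; l * a, 0, l * c; m * a, 0, m * c] !![1, 1, 0; -1, -1, 0; -1, -1, 0] := by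
  have hs : √(-l) ^ 2 = -l := Real.sq_sqrt (by linarith)
  have hs0 : √(-l) ≠ 0 := (Real.sqrt_pos.2 (by linarith)).ne'
  refine evolIso_of_monomial (Equiv.swap 1 2) ![a, a * √(-l), a ^ 2 / c] ?_ ?_
  · intro i
    fin_cases i <;> simp [*]
  · intro i j
    fin_cases i <;> fin_cases j <;> simp [Equiv.swap_apply_of_ne_of_ne] <;> field_simp <;> linarith

theorem stmt (a b c l m : ℝ)
    (ha : a ≠ 0) (hq : a ^ 2 + l * b ^ 2 + m * c ^ 2 = 0)
    (hcond : (c = 0 ∧ l * b * m ≠ 0 ∧ m < 0) ∨ (b = 0 ∧ l * c * m ≠ 0 ∧ l < 0)) :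
    EvolIso (!![a, b, c; l * a, l * b, l * c; m * a, m * b, m * c] : Matrix (Fin 3) (Fin 3) ℝ) (!![1, 1, 0; -1, -1, 0; -1, -1, 0] : Matrix (Fin 3) (Fin 3) ℝ) := by
  rcases hcond with ⟨rfl, hlbm, hm⟩ | ⟨rfl, hlcm, hl⟩
  · have hb : b ≠ 0 := by rintro rfl; simp at hlbm
    simpa using evolIso_of_third_eq_zero ha hb (by simpa using hq) hm
  · have hc : c ≠ 0 := by rintro rfl; simp at hlcm
    simpa using evolIso_of_second_eq_zero ha hc (by simpa using hq) hl
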